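/- Let m > 0 be real and p ≥ 1 an integer, and let f(x) = -m²x² + x^{2p+2}/(p+1). There exist constants η₀ > 0 and C > 0 (depending only on m and p) such that for every η with 0 < η < η₀ there is a unique α > m^{1/p} with f(α) = f(η), and this α satisfies |α - (p+1)^{1/(2p)} m^{1/p}| ≤ C η². -/

import Mathlib

/-!
With `r = m^{1/p}` and `A = (p+1)^{1/(2p)} r`, we have `f' = 2x(x^{2p} - m²)`, so `f` decreases on
`[0, r]` and is increasing and convex on `[r, ∞)`, while `f(A) = 0`. For `0 < η < r` this gives
`f(r) < f(η) < 0 = f(A)`, hence a unique `α > r` with `f(α) = f(η)`, and `α < A`. Since the chord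
of `f` over `[r, A]` lies above the graph,
`(A - α)(-f(r)) ≤ (A - r)(-f(α)) = (A - r)(-f(η)) ≤ (A - r) m² η²`.
-/

/-- The potential `f(x) = -m²x² + x^{2p+2}/(p+1)`. -/
noncomputable def potential (m : ℝ) (p : ℕ) (x : ℝ) : ℝ :=
  -(m ^ 2) * x ^ 2 + x ^ (2 * p + 2) / ((p : ℝ) + 1)

open Set

lemma Real.rpow_one_div_natCast_pow {x : ℝ} (hx : 0 ≤ x) {n : ℕ} (hn : n ≠ 0) :
    (x ^ ((1 : ℝ) / n)) ^ n = x := by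
  rw [one_div, Real.rpow_inv_natCast_pow hx hn]

section

variable {m : ℝ} {p : ℕ}

lemma hasDerivAt_potential (x : ℝ) :
    HasDerivAt (potential m p) (2 * x * (x ^ (2 * p) - m ^ 2)) x := by
  have h := ((hasDerivAt_pow 2 x).const_mul (-(m ^ 2))).add
    ((hasDerivAt_pow (2 * p + 2) x).div_const ((p : ℝ) + 1))
  refine h.congr_deriv ?_
  rw [show 2 * p + 2 - 1 = 2 * p + 1 by omega]
  field_simp
  push_cast
  ring

lemma deriv_potential : deriv (potential m p) = fun x ↦ 2 * x * (x ^ (2 * p) - m ^ 2) :=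
  funext fun x ↦ (hasDerivAt_potential x).deriv

lemma differentiable_potential : Differentiable ℝ (potential m p) :=
  fun x ↦ (hasDerivAt_potential x).differentiableAt

lemma continuous_potential : Continuous (potential m p) :=
  differentiable_potential.continuous

@[simp] lemma potential_zero : potential m p 0 = 0 := by simp [potential]

lemma potential_eq_zero_of_pow_eq {A : ℝ} (hA : A ^ (2 * p) = ((p : ℝ) + 1) * m ^ 2) :
    potential m p A = 0 := by
  rw [potential, pow_add, hA]
  field_simp
  ring

lemma neg_mul_sq_le_potential (x : ℝ) : -(m ^ 2) * x ^ 2 ≤ potential m p x := by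
  have : 0 ≤ x ^ (2 * p + 2) / ((p : ℝ) + 1) :=
    div_nonneg (Even.pow_nonneg ⟨p + 1, by ring⟩ x) (by positivity)
  rw [potential]
  linarith

variable {r : ℝ}

lemma strictMonoOn_potential_Ici (hp : p ≠ 0) (hr : 0 ≤ r) (hrm : r ^ (2 * p) = m ^ 2) :
    StrictMonoOn (potential m p) (Ici r) := by
  refine strictMonoOn_of_deriv_pos (convex_Ici r) continuous_potential.continuousOn fun x hx ↦ ?_
  rw [interior_Ici] at hx
  have hx0 : 0 < x := hr.trans_lt hx
  have : m ^ 2 < x ^ (2 * p) := hrm ▸ pow_lt_pow_left₀ hx hr (by omega)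
  rw [deriv_potential]
  exact mul_pos (by positivity) (sub_pos.mpr this)

lemma strictAntiOn_potential_Icc (hp : p ≠ 0) (hrm : r ^ (2 * p) = m ^ 2) :
    StrictAntiOn (potential m p) (Icc 0 r) := by
  refine strictAntiOn_of_deriv_neg (convex_Icc 0 r) continuous_potential.continuousOn fun x hx ↦ ?_
  rw [interior_Icc] at hx
  have : x ^ (2 * p) < m ^ 2 := hrm ▸ pow_lt_pow_left₀ hx.2 hx.1.le (by omega)
  rw [deriv_potential]
  exact mul_neg_of_pos_of_neg (by linarith [hx.1]) (sub_neg.mpr this)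

lemma convexOn_potential_Ici (hr : 0 ≤ r) (hrm : r ^ (2 * p) = m ^ 2) :
    ConvexOn ℝ (Ici r) (potential m p) := by
  refine MonotoneOn.convexOn_of_deriv (convex_Ici r) continuous_potential.continuousOn
    differentiable_potential.differentiableOn ?_
  rw [interior_Ici, deriv_potential]
  intro x hx y _ hxy
  have hx0 : 0 ≤ x := hr.trans (le_of_lt hx)
  have : m ^ 2 ≤ x ^ (2 * p) := hrm ▸ pow_le_pow_left₀ hr (le_of_lt hx) _
  have := pow_le_pow_left₀ hx0 hxy (2 * p)
  exact mul_le_mul (by linarith) (by linarith) (by linarith) (by linarith)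

variable {A : ℝ}

lemma existsUnique_potential_eq (hp : p ≠ 0) (hr : 0 ≤ r) (hrm : r ^ (2 * p) = m ^ 2) (hrA : r ≤ A)
    {y : ℝ} (hry : potential m p r < y) (hyA : y < potential m p A) :
    ∃! α, r < α ∧ potential m p α = y := by
  obtain ⟨α, hα, rfl⟩ := intermediate_value_Ioo hrA continuous_potential.continuousOn ⟨hry, hyA⟩
  refine ⟨α, ⟨hα.1, rfl⟩, fun β ⟨hβ, hβα⟩ ↦ ?_⟩
  exact (strictMonoOn_potential_Ici hp hr hrm).injOn (le_of_lt hβ) (le_of_lt hα.1) hβα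

lemma abs_sub_mul_le_of_potential_eq (hp : p ≠ 0) (hr : 0 ≤ r) (hrm : r ^ (2 * p) = m ^ 2)
    (hrA : r < A) (hA : potential m p A = 0) {α x : ℝ} (hα : r < α)
    (hαx : potential m p α = potential m p x) (hx : potential m p x < 0) :
    |α - A| * -potential m p r ≤ m ^ 2 * (A - r) * x ^ 2 := by
  have hαA : α < A :=
    (strictMonoOn_potential_Ici hp hr hrm).lt_iff_lt (le_of_lt hα) hrA.le |>.mp (by rwa [hαx, hA])
  have hchord := (convexOn_potential_Ici hr hrm).secant_mono_aux1 (le_refl r) hrA.le hα hαA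
  rw [hA, hαx] at hchord
  rw [abs_sub_comm, abs_of_pos (sub_pos.mpr hαA)]
  nlinarith [neg_mul_sq_le_potential (m := m) (p := p) x]

end

/-- for `η` small there is a unique `α > m^{1/p}` with `f(α) = f(η)`, and
it satisfies `|α - (p+1)^{1/(2p)} m^{1/p}| ≤ C η²`. -/
theorem turning_point_close_to_h0 (m : ℝ) (p : ℕ) (hm : 0 < m) (hp : 1 ≤ p) :
    ∃ η₀ > 0, ∃ C > 0, ∀ η : ℝ, 0 < η → η < η₀ →
      (∃! α : ℝ, m ^ ((1 : ℝ) / p) < α ∧ potential m p α = potential m p η) ∧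
      (∀ α : ℝ, m ^ ((1 : ℝ) / p) < α → potential m p α = potential m p η →
        |α - ((p : ℝ) + 1) ^ ((1 : ℝ) / (2 * p)) * m ^ ((1 : ℝ) / p)| ≤ C * η ^ 2) := by
  have hp0 : p ≠ 0 := by omega
  set r := m ^ ((1 : ℝ) / p)
  set c := ((p : ℝ) + 1) ^ ((1 : ℝ) / (2 * p))
  have hr : 0 < r := by positivity
  have hrm : r ^ (2 * p) = m ^ 2 := by
    rw [mul_comm, pow_mul, Real.rpow_one_div_natCast_pow hm.le hp0]
  have hrA : r < c * r :=
    lt_mul_left hr <| Real.one_lt_rpow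
      (by linarith [(Nat.one_le_cast.mpr hp : (1 : ℝ) ≤ p)]) (by positivity)
  have hA : potential m p (c * r) = 0 := by
    refine potential_eq_zero_of_pow_eq ?_
    have hc := Real.rpow_one_div_natCast_pow (x := (p : ℝ) + 1) (n := 2 * p)
      (by positivity) (by omega)
    rw [Nat.cast_mul, Nat.cast_ofNat] at hc
    rw [mul_pow, hc, hrm]
  have hanti := strictAntiOn_potential_Icc hp0 hrm
  have hfr : potential m p r < 0 := by
    simpa using hanti ⟨le_rfl, hr.le⟩ ⟨hr.le, le_rfl⟩ hr
  refine ⟨r, hr, m ^ 2 * (c * r - r) / -potential m p r,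
    div_pos (mul_pos (by positivity) (sub_pos.mpr hrA)) (neg_pos.mpr hfr), fun η hη hηr ↦ ?_⟩
  have hfη : potential m p r < potential m p η := hanti ⟨hη.le, hηr.le⟩ ⟨hr.le, le_rfl⟩ hηr
  have hfη0 : potential m p η < 0 := by simpa using hanti ⟨le_rfl, hr.le⟩ ⟨hη.le, hηr.le⟩ hη
  refine ⟨existsUnique_potential_eq hp0 hr.le hrm hrA.le hfη (hA ▸ hfη0), fun α hα hfα ↦ ?_⟩
  rw [div_mul_eq_mul_div, le_div_iff₀ (neg_pos.mpr hfr)]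
  exact abs_sub_mul_le_of_potential_eq hp0 hr.le hrm hrA hA hα hfα hfη0
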